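/- arXiv:math/0304465 — 3 statements merged into one kernel-verified Lean document; each statement's English description precedes it below -/
import Mathlib

section
/- The function T(z) defined on [0, 1/φ) by the convergent series T(z) = ∑_{k≥0} τ^{(k)}(z), where τ(z) = z² + z³ and τ^{(k)} denotes k-fold iteration, satisfies the functional equation T(z) = z + T(τ(z)) and each τ^{(k)}(z) ≤ z·φ^{-k}·c for some constant c when 0 ≤ z < 1/φ. In particular T(z) = z + T(z²+z³) for 0 ≤ z < 1/φ, where φ = (1+√5)/2. -/
open Filter Real

/-- Let `τ z = z² + z³` and `φ = (1+√5)/2`. For `0 ≤ z < 1/φ`, the iterates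
`τ^[k] z` are bounded by `z·φ⁻ᵏ·c` for some constant `c > 0`, the series
`T z = ∑_k τ^[k] z` converges, and `T` satisfies the functional equation
`T z = z + T (τ z)`, i.e. `T z = z + T (z² + z³)`. -/
theorem two_three_trees_functional_equation :
    let τ : ℝ → ℝ := fun z => z ^ 2 + z ^ 3
    let φ : ℝ := (1 + Real.sqrt 5) / 2
    let T : ℝ → ℝ := fun z => ∑' k : ℕ, τ^[k] z
    ∀ z : ℝ, 0 ≤ z → z < 1 / φ →
      (∃ c : ℝ, 0 < c ∧ ∀ k : ℕ, τ^[k] z ≤ z * φ ^ (-(k : ℤ)) * c) ∧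
        Summable (fun k : ℕ => τ^[k] z) ∧
        T z = z + T (τ z) ∧
        T z = z + T (z ^ 2 + z ^ 3) := by
  intro τ φ T z hz hz1
  have hs5 : Real.sqrt 5 ^ 2 = 5 := Real.sq_sqrt (by norm_num)
  have hs0 : 0 ≤ Real.sqrt 5 := Real.sqrt_nonneg 5
  have hs2 : 2 ≤ Real.sqrt 5 := by nlinarith
  have hφ1 : 1 < φ := by show (1:ℝ) < (1 + Real.sqrt 5)/2; nlinarith
  have hφ0 : 0 < φ := lt_trans one_pos hφ1
  have hφsq : φ ^ 2 = φ + 1 := by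
    show ((1 + Real.sqrt 5)/2) ^ 2 = (1 + Real.sqrt 5)/2 + 1; nlinarith
  have hinv : 1 / φ = φ - 1 := by
    rw [div_eq_iff (ne_of_gt hφ0)]; nlinarith
  have hzφ : z * φ < 1 := (lt_div_iff₀ hφ0).mp hz1
  have hzlt : z < φ - 1 := by rwa [hinv] at hz1
  have hτ : ∀ x : ℝ, τ x = x ^ 2 + x ^ 3 := fun x => rfl
  have hit : ∀ k, τ^[k + 1] z = τ (τ^[k] z) := fun k =>
    Function.iterate_succ_apply' τ k z
  -- nonnegativity and boundedness by z
  have hpos : ∀ k, 0 ≤ τ^[k] z := by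
    intro k; induction k with
    | zero => exact hz
    | succ n ih =>
      rw [hit, hτ]
      exact add_nonneg (sq_nonneg _) (pow_nonneg ih 3)
  have hle : ∀ k, τ^[k] z ≤ z := by
    intro k; induction k with
    | zero => exact le_refl z
    | succ n ih =>
      rw [hit, hτ]
      have hx := hpos n
      have h1 : τ^[n] z + (τ^[n] z) ^ 2 ≤ 1 := by
        nlinarith [mul_nonneg (sub_nonneg.2 ih) (add_nonneg hz hx),
          mul_nonneg (le_of_lt (sub_pos.2 hzlt))
            (add_nonneg (by linarith : (0:ℝ) ≤ φ - 1) hz)]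
      calc (τ^[n] z) ^ 2 + (τ^[n] z) ^ 3 = (τ^[n] z) * (τ^[n] z + (τ^[n] z) ^ 2) := by ring
        _ ≤ (τ^[n] z) * 1 := mul_le_mul_of_nonneg_left h1 hx
        _ = τ^[n] z := mul_one _
        _ ≤ z := ih
  -- geometric bound
  have hgeo : ∀ k, τ^[k] z ≤ z * (z * φ) ^ k := by
    intro k; induction k with
    | zero => simp
    | succ n ih =>
      rw [hit, hτ]
      have hx0 := hpos n
      have hxz := hle n
      calc (τ^[n] z) ^ 2 + (τ^[n] z) ^ 3
          = (τ^[n] z) * ((τ^[n] z) * (1 + τ^[n] z)) := by ring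
        _ ≤ (τ^[n] z) * (z * φ) := by
            apply mul_le_mul_of_nonneg_left _ hx0
            nlinarith
        _ ≤ (z * (z * φ) ^ n) * (z * φ) := by
            apply mul_le_mul_of_nonneg_right ih
            positivity
        _ = z * (z * φ) ^ (n + 1) := by ring
  have hzφ0 : 0 ≤ z * φ := by positivity
  -- summability
  have hsum : Summable (fun k : ℕ => τ^[k] z) := by
    apply Summable.of_nonneg_of_le hpos hgeo
    exact (summable_geometric_of_lt_one hzφ0 hzφ).mul_left z
  -- find N with τ^[N] z ≤ 1/3
  obtain ⟨N, hN⟩ : ∃ N : ℕ, z * (z * φ) ^ N ≤ 1 / 3 := by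
    rcases eq_or_lt_of_le hz with h0 | h0
    · exact ⟨0, by rw [← h0]; norm_num⟩
    · obtain ⟨n, hn⟩ := exists_pow_lt_of_lt_one (by positivity : (0:ℝ) < (1/3)/z) hzφ
      refine ⟨n, ?_⟩
      have := (lt_div_iff₀ h0).mp hn
      linarith [this]
  have hN3 : τ^[N] z ≤ 1 / 3 := (hgeo N).trans hN
  -- after N, geometric decay with ratio 1/φ
  have hφinv3 : (4 : ℝ) / 9 ≤ 1 / φ := by
    rw [hinv]; nlinarith
  have hafter : ∀ j, τ^[N + j] z ≤ 1 / 3 ∧ τ^[N + j] z ≤ z * (1 / φ) ^ j := by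
    intro j; induction j with
    | zero => exact ⟨hN3, by simpa using hle N⟩
    | succ m ih =>
      obtain ⟨ih3, ihb⟩ := ih
      have hx0 := hpos (N + m)
      have key : τ^[N + (m + 1)] z ≤ τ^[N + m] z * (4 / 9) := by
        have : N + (m + 1) = (N + m) + 1 := by ring
        rw [this, hit, hτ]
        nlinarith [sq_nonneg (τ^[N+m] z)]
      constructor
      · nlinarith
      · calc τ^[N + (m + 1)] z ≤ τ^[N + m] z * (4 / 9) := key
          _ ≤ τ^[N + m] z * (1 / φ) := by
              apply mul_le_mul_of_nonneg_left hφinv3 hx0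
          _ ≤ (z * (1 / φ) ^ m) * (1 / φ) := by
              apply mul_le_mul_of_nonneg_right ihb
              positivity
          _ = z * (1 / φ) ^ (m + 1) := by ring
  -- the constant
  have hφ1' : (1:ℝ) ≤ φ := le_of_lt hφ1
  refine ⟨⟨φ ^ N, by positivity, ?_⟩, hsum, ?_, ?_⟩
  · intro k
    rcases le_or_gt k N with hk | hk
    · have h1 : τ^[k] z ≤ z := hle k
      have h2 : (1:ℝ) ≤ φ ^ (-(k:ℤ)) * φ ^ N := by
        rw [← zpow_natCast φ N, ← zpow_add₀ (ne_of_gt hφ0)]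
        apply one_le_zpow₀ hφ1'
        omega
      nlinarith [hpos k]
    · obtain ⟨j, rfl⟩ : ∃ j, k = N + j := ⟨k - N, by omega⟩
      have hb := (hafter j).2
      have heq : z * φ ^ (-((N + j : ℕ) : ℤ)) * φ ^ N = z * (1 / φ) ^ j := by
        rw [one_div, inv_pow, ← zpow_natCast φ j, ← zpow_neg, ← zpow_natCast φ N,
          mul_assoc, ← zpow_add₀ (ne_of_gt hφ0)]
        congr 2
        push_cast
        ring
      rw [heq]
      exact hb
  · -- functional equation
    have h1 : T z = τ^[0] z + ∑' k : ℕ, τ^[k + 1] z := Summable.tsum_eq_zero_add hsum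
    simp only [Function.iterate_zero_apply] at h1
    rw [h1]
    congr 1
  · have h1 : T z = τ^[0] z + ∑' k : ℕ, τ^[k + 1] z := Summable.tsum_eq_zero_add hsum
    simp only [Function.iterate_zero_apply] at h1
    rw [h1]
    congr 1
end

section
/- For |z| < R_f · R_g and any r with |z|/R_g < r < R_f, the Hadamard product satisfies the integral representation (f ⊙ g)(z) = (1/2πi) ∮_{|t|=r} f(t) g(z/t) dt/t. -/
open Complex Metric
open scoped Real

/-!
Expand `g (z / t) = ∑ gₘ zᵐ t⁻ᵐ`. Since `|z| / r < R_g`, the series is dominated on `|t| = r` by a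
summable sequence, so it can be integrated term by term against `f(t) dt / t`, and by Cauchy's
formula `(2πi)⁻¹ ∮ f(t) t⁻ᵐ⁻¹ dt = fₘ`.
-/

namespace FormalMultilinearSeries

variable {𝕜 : Type*} [RCLike 𝕜] {c : ℕ → 𝕜} {R : ℝ}

theorem ofReal_le_radius_ofScalars
    (hc : ∀ x : 𝕜, ‖x‖ < R → Summable fun n => c n * x ^ n) :
    ENNReal.ofReal R ≤ (ofScalars 𝕜 c).radius := by
  refine ENNReal.le_of_forall_nnreal_lt fun t ht => ?_
  have htR : ‖((t : ℝ) : 𝕜)‖ < R := by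
    rw [RCLike.norm_ofReal, NNReal.abs_eq]
    exact (ENNReal.lt_ofReal_iff_toReal_lt ENNReal.coe_ne_top).1 ht
  refine (ofScalars 𝕜 c).le_radius_of_tendsto (l := 0) ?_
  simpa only [ofScalars_norm, norm_mul, norm_pow, RCLike.norm_ofReal, NNReal.abs_eq, norm_zero]
    using (hc _ htR).tendsto_atTop_zero.norm

theorem summable_norm_mul_pow_of_summable
    (hc : ∀ x : 𝕜, ‖x‖ < R → Summable fun n => c n * x ^ n) {ρ : ℝ} (hρ0 : 0 ≤ ρ) (hρR : ρ < R) :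
    Summable fun n => ‖c n‖ * ρ ^ n := by
  lift ρ to NNReal using hρ0
  have hρ : (ρ : ENNReal) < (ofScalars 𝕜 c).radius :=
    ((ENNReal.lt_ofReal_iff_toReal_lt ENNReal.coe_ne_top).2 hρR).trans_le
      (ofReal_le_radius_ofScalars hc)
  simpa only [ofScalars_norm] using (ofScalars 𝕜 c).summable_norm_mul_pow hρ

theorem hasFPowerSeriesOnBall_ofScalars {f : 𝕜 → 𝕜} (hR : 0 < R)
    (hf : ∀ x : 𝕜, ‖x‖ < R → HasSum (fun n => c n * x ^ n) (f x)) :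
    HasFPowerSeriesOnBall f (ofScalars 𝕜 c) 0 (ENNReal.ofReal R) where
  r_le := ofReal_le_radius_ofScalars fun x hx => (hf x hx).summable
  r_pos := ENNReal.ofReal_pos.2 hR
  hasSum {y} hy := by
    rw [mem_eball_zero_iff, ← ofReal_norm,
      ENNReal.ofReal_lt_ofReal_iff_of_nonneg (norm_nonneg y)] at hy
    simpa only [ofScalars_apply_eq, smul_eq_mul, zero_add, mul_comm] using hf y hy

end FormalMultilinearSeries

theorem circleIntegral.hasSum_of_norm_le {E : Type*} [NormedAddCommGroup E] [NormedSpace ℂ E]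
    {F : ℕ → ℂ → E} {G : ℂ → E} {c : ℂ} {R : ℝ} (hR : 0 ≤ R)
    (bound : ℕ → ℝ) (hF : ∀ n, CircleIntegrable (F n) c R)
    (h_bound : ∀ n, ∀ t ∈ sphere c R, ‖F n t‖ ≤ bound n) (h_summable : Summable bound)
    (h_lim : ∀ t ∈ sphere c R, HasSum (fun n => F n t) (G t)) :
    HasSum (fun n => ∮ t in C(c, R), F n t) (∮ t in C(c, R), G t) := by
  refine intervalIntegral.hasSum_integral_of_dominated_convergence (fun n _ => R * bound n)
    (fun n => ((circleIntegrable_iff R).1 (hF n)).def'.1) (fun n => ?_)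
    (.of_forall fun _ _ => h_summable.mul_left R) intervalIntegrable_const
    (.of_forall fun θ _ => (h_lim _ (circleMap_mem_sphere c hR θ)).const_smul _)
  refine .of_forall fun θ _ => ?_
  rw [norm_smul, deriv_circleMap, norm_mul, norm_I, mul_one, norm_circleMap_zero, abs_of_nonneg hR]
  exact mul_le_mul_of_nonneg_left (h_bound n _ (circleMap_mem_sphere c hR θ)) hR

theorem circleIntegral_div_pow_succ_eq_of_hasFPowerSeriesOnBall {f : ℂ → ℂ} {c : ℕ → ℂ}
    {R r : ℝ} (hf : HasFPowerSeriesOnBall f (.ofScalars ℂ c) 0 (ENNReal.ofReal R))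
    (hr0 : 0 < r) (hrR : r < R) (n : ℕ) :
    ∮ t in C(0, r), f t / t ^ (n + 1) = 2 * π * I * c n := by
  lift r to NNReal using hr0.le
  have hdiff : DifferentiableOn ℂ f (closedBall 0 r) :=
    hf.differentiableOn.mono (by rw [eball_ofReal]; exact closedBall_subset_ball hrR)
  have hcauchy := (hdiff.hasFPowerSeriesOnBall (mod_cast hr0)).hasFPowerSeriesAt
  have hcoeff := congrArg (fun p => p n fun _ => (1 : ℂ))
    (hcauchy.eq_formalMultilinearSeries hf.hasFPowerSeriesAt)
  simp only [cauchyPowerSeries_apply, FormalMultilinearSeries.ofScalars_apply_eq, one_pow,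
    smul_eq_mul, mul_one, sub_zero, div_eq_mul_inv, one_mul] at hcoeff
  rw [← hcoeff, ← mul_assoc, mul_inv_cancel₀ two_pi_I_ne_zero, one_mul]
  refine circleIntegral.integral_congr r.2 fun t _ => ?_
  simp only [div_eq_mul_inv, pow_succ, mul_inv, inv_pow]
  ring

theorem hasSum_circleIntegral_mul_comp_div {f g : ℂ → ℂ} {gc : ℕ → ℂ} {R r : ℝ} {z : ℂ}
    (hg : ∀ x : ℂ, ‖x‖ < R → HasSum (fun n => gc n * x ^ n) (g x))
    (hf : ContinuousOn f (sphere 0 r)) (hr0 : 0 < r) (hzr : ‖z‖ / r < R) :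
    HasSum (fun m => gc m * z ^ m * ∮ t in C(0, r), f t / t ^ (m + 1))
      (∮ t in C(0, r), f t * g (z / t) / t) := by
  have hsphere_ne : ∀ t ∈ sphere (0 : ℂ) r, t ≠ 0 := fun t ht h => by
    rw [h, mem_sphere_zero_iff_norm, norm_zero] at ht
    exact hr0.ne ht
  obtain ⟨M, hM⟩ := (isCompact_sphere (0 : ℂ) r).exists_bound_of_continuousOn hf
  simp only [← circleIntegral.integral_const_mul]
  refine circleIntegral.hasSum_of_norm_le hr0.le (fun m => ‖gc m‖ * (‖z‖ / r) ^ m * (M / r))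
    (fun m => ?_) (fun m t ht => ?_) ?_ (fun t ht => ?_)
  · exact (continuousOn_const.mul (hf.div (continuousOn_pow _)
      fun t ht => pow_ne_zero _ (hsphere_ne t ht))).circleIntegrable hr0.le
  · calc ‖gc m * z ^ m * (f t / t ^ (m + 1))‖ = ‖gc m‖ * ‖z‖ ^ m * (‖f t‖ / r ^ (m + 1)) := by
          rw [norm_mul, norm_mul, norm_div, norm_pow, norm_pow, mem_sphere_zero_iff_norm.1 ht]
      _ ≤ ‖gc m‖ * ‖z‖ ^ m * (M / r ^ (m + 1)) := by gcongr; exact hM t ht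
      _ = ‖gc m‖ * (‖z‖ / r) ^ m * (M / r) := by rw [div_pow, pow_succ]; field_simp
  · exact (FormalMultilinearSeries.summable_norm_mul_pow_of_summable
      (fun x hx => (hg x hx).summable) (by positivity) hzr).mul_right _
  · have hzt : ‖z / t‖ < R := by rwa [norm_div, mem_sphere_zero_iff_norm.1 ht]
    have hterm : ∀ m, gc m * (z / t) ^ m * (f t / t) = gc m * z ^ m * (f t / t ^ (m + 1)) :=
      fun m => by rw [div_pow, pow_succ]; field_simp [hsphere_ne t ht]
    have h := (hg _ hzt).mul_right (f t / t)
    rwa [funext hterm, mul_comm (g _), div_mul_eq_mul_div] at h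

theorem hadamard_product_integral_representation_general
    (f g : ℂ → ℂ) (fc gc : ℕ → ℂ) (Rf Rg : ℝ)
    (hRg : 0 < Rg)
    (hfc : ∀ x : ℂ, ‖x‖ < Rf → HasSum (fun n : ℕ => fc n * x ^ n) (f x))
    (hgc : ∀ x : ℂ, ‖x‖ < Rg → HasSum (fun n : ℕ => gc n * x ^ n) (g x))
    (z : ℂ)
    (r : ℝ) (hr1 : ‖z‖ / Rg < r) (hr2 : r < Rf) :
    HasSum (fun n : ℕ => fc n * gc n * z ^ n)
      ((2 * Real.pi * Complex.I)⁻¹ *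
        ∮ t in C(0, r), f t * g (z / t) / t) := by
  have hr0 : 0 < r := (div_nonneg (norm_nonneg z) hRg.le).trans_lt hr1
  have hzr : ‖z‖ / r < Rg := by
    rw [div_lt_iff₀ hRg] at hr1
    rwa [div_lt_iff₀ hr0, mul_comm]
  have hf := FormalMultilinearSeries.hasFPowerSeriesOnBall_ofScalars (hr0.trans hr2) hfc
  have hf_sphere : ContinuousOn f (sphere 0 r) :=
    hf.continuousOn.mono <| by
      rw [eball_ofReal]; exact sphere_subset_closedBall.trans (closedBall_subset_ball hr2)
  have hterms := hasSum_circleIntegral_mul_comp_div hgc hf_sphere hr0 hzr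
  simp only [circleIntegral_div_pow_succ_eq_of_hasFPowerSeriesOnBall hf hr0 hr2] at hterms
  have hcoeff : ∀ m, (2 * π * I)⁻¹ * (gc m * z ^ m * (2 * π * I * fc m)) = fc m * gc m * z ^ m :=
    fun m => by field_simp [two_pi_I_ne_zero]
  simpa only [hcoeff] using hterms.mul_left (2 * π * I)⁻¹

/-- Hadamard product integral representation: if `f` and `g` are analytic on
discs of radii `Rf`, `Rg` with Taylor coefficients `fc`, `gc`, then for
`‖z‖ < Rf·Rg` and any `r` with `‖z‖/Rg < r < Rf`,
`(f ⊙ g)(z) = (1/2πi) ∮_{|t|=r} f(t) g(z/t) dt/t`. -/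
theorem hadamard_product_integral_representation
    (f g : ℂ → ℂ) (fc gc : ℕ → ℂ) (Rf Rg : ℝ)
    (hRf : 0 < Rf) (hRg : 0 < Rg)
    (hfa : DifferentiableOn ℂ f (ball 0 Rf))
    (hga : DifferentiableOn ℂ g (ball 0 Rg))
    (hfc : ∀ x : ℂ, ‖x‖ < Rf → HasSum (fun n : ℕ => fc n * x ^ n) (f x))
    (hgc : ∀ x : ℂ, ‖x‖ < Rg → HasSum (fun n : ℕ => gc n * x ^ n) (g x))
    (z : ℂ) (hz : ‖z‖ < Rf * Rg)
    (r : ℝ) (hr1 : ‖z‖ / Rg < r) (hr2 : r < Rf) :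
    HasSum (fun n : ℕ => fc n * gc n * z ^ n)
      ((2 * Real.pi * Complex.I)⁻¹ *
        ∮ t in C(0, r), f t * g (z / t) / t) :=
  hadamard_product_integral_representation_general f g fc gc Rf Rg hRg hfc hgc z r hr1 hr2
end

section
/- Let f be analytic on the open unit disc and continuous on the closed disc minus {1}, and suppose f is analytic on a Δ-domain Δ(θ, r) = {z : |z| < r, z ≠ 1, θ < |Arg(z-1)|} for some r > 1 and 0 < θ < π/2. If f(z) = O((1-z)^(-α)) as z → 1 in Δ for some real α > 0, then there exists a constant K with |[z^n] f(z)| ≤ K · n^(α-1) for all n ≥ 1. -/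
/-!
On a disc centred at `z` of radius proportional to `‖1 - z‖` the function `f` is analytic (the
disc fits inside the Δ-domain) and of size `O(‖1 - z‖ ^ (-α))`, so Cauchy's estimate gives
`f' = O(‖1 - z‖ ^ (-α - 1))` on the unit disc. The Cauchy coefficient bound for `f'` on the
circle of radius `ρ = n / (n + 1)` reads `n ‖a n‖ ≤ (2π)⁻¹ ρ ^ (1 - n) ∫ ‖f' (ρ e^{it})‖ dt`.
Since `‖1 - ρ e^{it}‖ ≥ ((1 - ρ) + |t| / π) / 2` on `[-π, π]`, the integral is
`O((1 - ρ) ^ (-α)) = O(n ^ α)`, while `ρ ^ (1 - n) ≤ e`.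
-/

open Complex Metric Set
open scoped Real Nat NNReal

def deltaDomain (r θ : ℝ) : Set ℂ := {z : ℂ | ‖z‖ < r ∧ z ≠ 1 ∧ θ < |arg (z - 1)|}

theorem lt_abs_arg_of_re_lt_norm_mul_cos {θ : ℝ} (hθ : θ ≤ π) {u : ℂ}
    (hu : u.re < ‖u‖ * Real.cos θ) : θ < |arg u| := by
  by_contra! h
  have hcos : Real.cos θ ≤ Real.cos (arg u) := by
    rw [← Real.cos_abs (arg u)]
    exact Real.cos_le_cos_of_nonneg_of_le_pi (abs_nonneg _) hθ h
  have := mul_le_mul_of_nonneg_left hcos (norm_nonneg u)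
  rw [norm_mul_cos_arg] at this
  linarith

theorem closedBall_subset_deltaDomain {r θ : ℝ} (hr : 1 < r) (hθ0 : 0 < θ) (hθ : θ < π / 2) :
    ∃ c ∈ Ioc (0 : ℝ) (1 / 2), ∀ z ∈ closedBall (0 : ℂ) 1 \ {1},
      closedBall z (c * ‖1 - z‖) ⊆ deltaDomain r θ := by
  set γ := Real.cos θ
  have hγ : 0 < γ := Real.cos_pos_of_mem_Ioo ⟨by linarith, hθ⟩
  have hγ1 : γ ≤ 1 := Real.cos_le_one θ
  -- `c ≤ cos θ / 4` gives `c < (1 - c) cos θ`, which keeps the discs inside the sector;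
  -- `c ≤ (r - 1) / 4` keeps them inside the disc of radius `r`.
  set c := min (γ / 4) ((r - 1) / 4)
  have hcγ : c ≤ γ / 4 := min_le_left _ _
  have hcr : c ≤ (r - 1) / 4 := min_le_right _ _
  have hc0 : 0 < c := lt_min (by positivity) (by linarith)
  refine ⟨c, ⟨hc0, by linarith⟩, fun z ⟨hz, hz1⟩ w hw ↦ ?_⟩
  rw [mem_closedBall_zero_iff] at hz
  rw [mem_closedBall, dist_eq_norm] at hw
  set d := ‖1 - z‖
  have hd : 0 < d := norm_pos_iff.2 (sub_ne_zero.2 (Ne.symm hz1))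
  have hd2 : d ≤ 2 := (norm_sub_le _ _).trans (by rw [norm_one]; linarith)
  have hwd : (1 - c) * d ≤ ‖w - 1‖ := by
    have : d ≤ ‖w - 1‖ + ‖w - z‖ := by
      simpa [d, norm_sub_rev w 1] using norm_sub_le_norm_sub_add_norm_sub 1 w z
    nlinarith
  have hre : (w - 1).re ≤ c * d := by
    have h1 : (z - 1).re ≤ 0 := by simpa using re_le_norm z |>.trans hz
    have h2 := re_le_norm (w - z)
    have h3 : (w - 1).re = (z - 1).re + (w - z).re := by simp
    linarith
  refine ⟨?_, fun h ↦ ?_, lt_abs_arg_of_re_lt_norm_mul_cos (by linarith) ?_⟩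
  · calc ‖w‖ ≤ ‖z‖ + ‖w - z‖ := norm_le_norm_add_norm_sub' w z
      _ ≤ 1 + c * 2 := by gcongr; exact hw.trans (by gcongr)
      _ < r := by linarith
  · rw [h, sub_self, norm_zero] at hwd
    nlinarith
  · calc (w - 1).re ≤ c * d := hre
      _ < (1 - c) * γ * d := by gcongr; nlinarith
      _ = (1 - c) * d * γ := by ring
      _ ≤ ‖w - 1‖ * γ := by gcongr

theorem exists_norm_deriv_le_of_deltaDomain {E : Type*} [NormedAddCommGroup E] [NormedSpace ℂ E]
    {f : ℂ → E} {r θ α C : ℝ} (hr : 1 < r) (hθ0 : 0 < θ) (hθ : θ < π / 2) (hα : 0 ≤ α)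
    (hC : 0 ≤ C) (hf : DifferentiableOn ℂ f (deltaDomain r θ))
    (hfC : ∀ z ∈ deltaDomain r θ, ‖f z‖ ≤ C * ‖1 - z‖ ^ (-α)) :
    ∃ C' : ℝ, ∀ z ∈ closedBall (0 : ℂ) 1 \ {1}, ‖deriv f z‖ ≤ C' * ‖1 - z‖ ^ (-(α + 1)) := by
  obtain ⟨c, ⟨hc0, hc⟩, hsub⟩ := closedBall_subset_deltaDomain hr hθ0 hθ
  refine ⟨C * 2 ^ α / c, fun z hz ↦ ?_⟩
  set d := ‖1 - z‖
  have hd : 0 < d := norm_pos_iff.2 (sub_ne_zero.2 (Ne.symm hz.2))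
  have hsphere : ∀ w ∈ sphere z (c * d), ‖f w‖ ≤ C * 2 ^ α * d ^ (-α) := by
    intro w hw
    have hwd : d / 2 ≤ ‖1 - w‖ := by
      have : d ≤ ‖1 - w‖ + ‖w - z‖ := norm_sub_le_norm_sub_add_norm_sub 1 w z
      rw [mem_sphere, dist_eq_norm] at hw
      nlinarith
    calc ‖f w‖ ≤ C * ‖1 - w‖ ^ (-α) := hfC w (hsub z hz (sphere_subset_closedBall hw))
      _ ≤ C * (d / 2) ^ (-α) :=
          mul_le_mul_of_nonneg_left (Real.rpow_le_rpow_of_nonpos (half_pos hd) hwd (by linarith)) hC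
      _ = C * 2 ^ α * d ^ (-α) := by
          rw [Real.div_rpow hd.le zero_le_two, Real.rpow_neg zero_le_two]
          field_simp
  have hdiff : DiffContOnCl ℂ f (ball z (c * d)) :=
    (hf.mono ((closure_ball z (by positivity)).trans_subset (hsub z hz))).diffContOnCl
  calc ‖deriv f z‖ ≤ C * 2 ^ α * d ^ (-α) / (c * d) :=
        Complex.norm_deriv_le_of_forall_mem_sphere_norm_le (by positivity) hdiff hsphere
    _ = C * 2 ^ α / c * d ^ (-(α + 1)) := by
        rw [neg_add, Real.rpow_add hd, Real.rpow_neg_one]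
        field_simp

theorem coeff_eq_iteratedDeriv_div_factorial {𝕜 : Type*} [RCLike 𝕜] {f : 𝕜 → 𝕜} {a : ℕ → 𝕜}
    {R : ℝ} (hR : 0 < R) (hf : ∀ z ∈ ball (0 : 𝕜) R, HasSum (fun n ↦ a n * z ^ n) (f z))
    (n : ℕ) : a n = iteratedDeriv n f 0 / n ! := by
  set p := FormalMultilinearSeries.ofScalars 𝕜 a
  obtain ⟨r, hr0, hrR⟩ := exists_between hR
  lift r to ℝ≥0 using hr0.le
  have hsub : ball (0 : 𝕜) r ⊆ ball 0 R := ball_subset_ball hrR.le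
  have hp : HasFPowerSeriesOnBall f p 0 r :=
    { r_le := p.le_radius_of_tendsto (l := 0) <| by
        simpa [p, FormalMultilinearSeries.ofScalars_norm] using
          (hf ((r : ℝ) : 𝕜) (by simpa using hrR)).summable.tendsto_atTop_zero.norm
      r_pos := by exact_mod_cast hr0
      hasSum := fun {y} hy ↦ by
        simpa [p, FormalMultilinearSeries.ofScalars_apply_eq, mul_comm] using
          hf y (hsub (by simpa using hy)) }
  exact congrFun (FormalMultilinearSeries.ofScalars_series_injective 𝕜 𝕜
    (hp.hasFPowerSeriesAt.eq_formalMultilinearSeries hp.analyticAt.hasFPowerSeriesAt)) n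

theorem norm_iteratedDeriv_div_factorial_le {E : Type*} [NormedAddCommGroup E]
    [NormedSpace ℂ E] [CompleteSpace E] {g : ℂ → E} {c : ℂ} {R : ℝ} (hR : 0 < R)
    (hg : DifferentiableOn ℂ g (closedBall c R)) (k : ℕ) :
    ‖iteratedDeriv k g c‖ / k ! ≤
      (2 * π)⁻¹ * (∫ t in 0..2 * π, ‖g (circleMap c R t)‖) * R⁻¹ ^ k := by
  lift R to ℝ≥0 using hR.le
  have hk := (hg.hasFPowerSeriesOnBall hR).factorial_smul 1 k
  rw [iteratedFDeriv_apply_eq_iteratedDeriv_mul_prod, Finset.prod_const_one, one_smul] at hk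
  rw [← hk, RCLike.norm_nsmul ℂ, nsmul_eq_mul, mul_div_cancel_left₀ _ (by positivity)]
  calc ‖cauchyPowerSeries g c R k fun _ ↦ 1‖
      ≤ ‖cauchyPowerSeries g c R k‖ * ∏ _ : Fin k, ‖(1 : ℂ)‖ :=
        (cauchyPowerSeries g c R k).le_opNorm _
    _ ≤ _ := by simpa [abs_of_pos hR] using norm_cauchyPowerSeries_le g c R k

theorem abs_div_pi_le_norm_one_sub_circleMap {ρ t : ℝ} (hρ : 1 / 2 ≤ ρ) (ht : |t| ≤ π) :
    |t| / π ≤ ‖1 - circleMap 0 ρ t‖ := by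
  rcases le_or_gt |t| (π / 2) with hsmall | hlarge
  · have hsin := Real.mul_abs_le_abs_sin hsmall
    calc |t| / π = 1 / 2 * (2 / π * |t|) := by field_simp
      _ ≤ ρ * |Real.sin t| := by gcongr
      _ = |(1 - circleMap 0 ρ t).im| := by
          simp [circleMap, abs_mul, abs_of_pos (by linarith : 0 < ρ)]
      _ ≤ ‖1 - circleMap 0 ρ t‖ := abs_im_le_norm _
  · have hcos : Real.cos t ≤ 0 := by
      rw [← Real.cos_abs]
      exact Real.cos_nonpos_of_pi_div_two_le_of_le hlarge.le (by linarith)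
    calc |t| / π ≤ 1 := (div_le_one Real.pi_pos).2 ht
      _ ≤ (1 - circleMap 0 ρ t).re := by
          simp only [circleMap, zero_add, sub_re, one_re, mul_re, ofReal_re, exp_ofReal_mul_I_re,
            ofReal_im, exp_ofReal_mul_I_im, zero_mul, sub_zero, le_sub_self_iff]
          exact mul_nonpos_of_nonneg_of_nonpos (by linarith) hcos
      _ ≤ ‖1 - circleMap 0 ρ t‖ := re_le_norm _

theorem one_sub_le_norm_one_sub_circleMap {ρ : ℝ} (hρ : 0 ≤ ρ) (t : ℝ) :
    1 - ρ ≤ ‖1 - circleMap 0 ρ t‖ :=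
  calc 1 - ρ = ‖(1 : ℂ)‖ - ‖circleMap 0 ρ t‖ := by simp [norm_circleMap_zero, abs_of_nonneg hρ]
    _ ≤ ‖1 - circleMap 0 ρ t‖ := norm_sub_norm_le _ _

theorem continuous_norm_one_sub_circleMap_rpow {ρ : ℝ} (hρ : 0 ≤ ρ) (hρ1 : ρ < 1) (s : ℝ) :
    Continuous fun t ↦ ‖1 - circleMap 0 ρ t‖ ^ s :=
  (continuous_const.sub (continuous_circleMap 0 ρ)).norm.rpow_const fun t ↦
    .inl ((sub_pos.2 hρ1).trans_le (one_sub_le_norm_one_sub_circleMap hρ t)).ne'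

theorem intervalIntegral.integral_symm_eq_two_mul_of_even {F : ℝ → ℝ} (hF : Continuous F)
    (heven : ∀ t, F (-t) = F t) (b : ℝ) :
    ∫ t in -b..b, F t = 2 * ∫ t in 0..b, F t := by
  rw [← intervalIntegral.integral_add_adjacent_intervals (b := 0) (hF.intervalIntegrable _ _)
    (hF.intervalIntegrable _ _)]
  have : ∫ t in -b..0, F t = ∫ t in 0..b, F t := by
    simpa [heven] using (intervalIntegral.integral_comp_neg (a := 0) (b := b) F).symm
  rw [this, two_mul]

theorem norm_one_sub_circleMap_rpow_le {ρ t β : ℝ} (hρ : 1 / 2 ≤ ρ) (hρ1 : ρ < 1) (hβ : 0 ≤ β)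
    (ht : |t| ≤ π) :
    ‖1 - circleMap 0 ρ t‖ ^ (-β) ≤ 2 ^ β * (1 - ρ + |t| / π) ^ (-β) := by
  have hpos : 0 < 1 - ρ + |t| / π := by have := sub_pos.2 hρ1; positivity
  have hlow : (1 - ρ + |t| / π) / 2 ≤ ‖1 - circleMap 0 ρ t‖ := by
    linarith [abs_div_pi_le_norm_one_sub_circleMap hρ ht,
      one_sub_le_norm_one_sub_circleMap (by linarith : 0 ≤ ρ) t]
  calc _ ≤ ((1 - ρ + |t| / π) / 2) ^ (-β) :=
        Real.rpow_le_rpow_of_nonpos (half_pos hpos) hlow (by linarith)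
    _ = 2 ^ β * (1 - ρ + |t| / π) ^ (-β) := by
        rw [Real.div_rpow hpos.le zero_le_two, Real.rpow_neg zero_le_two]
        field_simp

theorem integral_add_div_pi_rpow_le {δ α : ℝ} (hδ : 0 < δ) (hα : 0 < α) :
    ∫ t in 0..π, (δ + t / π) ^ (-(α + 1)) ≤ π * (δ ^ (-α) / α) := by
  rw [intervalIntegral.integral_comp_div (fun s ↦ (δ + s) ^ (-(α + 1))) Real.pi_ne_zero,
    intervalIntegral.integral_comp_add_left (fun s ↦ s ^ (-(α + 1))), zero_div,
    div_self Real.pi_ne_zero, add_zero, smul_eq_mul,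
    integral_rpow (.inr ⟨by linarith, notMem_uIcc_of_lt hδ (by linarith)⟩),
    show -(α + 1) + 1 = -α by ring, div_neg, ← neg_div, neg_sub]
  gcongr
  linarith [Real.rpow_nonneg (by linarith : 0 ≤ δ + 1) (-α)]

theorem integral_norm_one_sub_circleMap_rpow_le {α ρ : ℝ} (hα : 0 < α) (hρ : 1 / 2 ≤ ρ)
    (hρ1 : ρ < 1) :
    ∫ t in 0..2 * π, ‖1 - circleMap 0 ρ t‖ ^ (-(α + 1)) ≤ 2 ^ (α + 2) * π / α * (1 - ρ) ^ (-α) := by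
  set δ := 1 - ρ
  have hδ : 0 < δ := sub_pos.2 hρ1
  set F : ℝ → ℝ := fun t ↦ ‖1 - circleMap 0 ρ t‖ ^ (-(α + 1))
  set G : ℝ → ℝ := fun t ↦ 2 ^ (α + 1) * (δ + |t| / π) ^ (-(α + 1))
  have hF : Continuous F := continuous_norm_one_sub_circleMap_rpow (by linarith) hρ1 _
  have hG : Continuous G := continuous_const.mul <|
    (continuous_const.add (continuous_abs.div_const π)).rpow_const fun t ↦
      .inl (add_pos_of_pos_of_nonneg hδ (by positivity)).ne'
  have hper : ∫ t in 0..2 * π, F t = ∫ t in -π..π, F t := by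
    have := ((periodic_circleMap 0 ρ).comp fun z ↦ ‖1 - z‖ ^ (-(α + 1))).intervalIntegral_add_eq
      0 (-π)
    rwa [zero_add, show -π + 2 * π = π by ring] at this
  calc ∫ t in 0..2 * π, F t = ∫ t in -π..π, F t := hper
    _ ≤ ∫ t in -π..π, G t := intervalIntegral.integral_mono_on (by linarith [Real.pi_pos])
          (hF.intervalIntegrable _ _) (hG.intervalIntegrable _ _) fun t ht ↦
          norm_one_sub_circleMap_rpow_le hρ hρ1 (by linarith) (abs_le.2 ht)
    _ = 2 * ∫ t in 0..π, G t :=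
          intervalIntegral.integral_symm_eq_two_mul_of_even hG (fun t ↦ by simp [G]) π
    _ = 2 * 2 ^ (α + 1) * ∫ t in 0..π, (δ + t / π) ^ (-(α + 1)) := by
          rw [mul_assoc, ← intervalIntegral.integral_const_mul (2 ^ (α + 1))]
          congr 1
          refine intervalIntegral.integral_congr fun t ht ↦ ?_
          rw [uIcc_of_le Real.pi_pos.le] at ht
          simp only [G, abs_of_nonneg ht.1]
    _ ≤ 2 * 2 ^ (α + 1) * (π * (δ ^ (-α) / α)) := by
          gcongr
          exact integral_add_div_pi_rpow_le hδ hα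
    _ = 2 ^ (α + 2) * π / α * δ ^ (-α) := by
          rw [Real.rpow_add two_pos, Real.rpow_add two_pos, Real.rpow_one]
          ring

theorem succ_mul_norm_coeff_succ_le {f : ℂ → ℂ} {a : ℕ → ℂ}
    (hf : DifferentiableOn ℂ f (ball 0 1))
    (hcoeff : ∀ z ∈ ball (0 : ℂ) 1, HasSum (fun n ↦ a n * z ^ n) (f z))
    {ρ : ℝ} (hρ0 : 0 < ρ) (hρ1 : ρ < 1) (k : ℕ) :
    (k + 1) * ‖a (k + 1)‖ ≤
      (2 * π)⁻¹ * (∫ t in 0..2 * π, ‖deriv f (circleMap 0 ρ t)‖) * ρ⁻¹ ^ k := by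
  have hf' : DifferentiableOn ℂ (deriv f) (closedBall 0 ρ) :=
    (hf.analyticOnNhd isOpen_ball).deriv.differentiableOn.mono (closedBall_subset_ball hρ1)
  have ha : a (k + 1) = iteratedDeriv k (deriv f) 0 / (k + 1)! := by
    rw [coeff_eq_iteratedDeriv_div_factorial one_pos hcoeff, iteratedDeriv_succ']
  calc (k + 1) * ‖a (k + 1)‖ = ‖iteratedDeriv k (deriv f) 0‖ / k ! := by
        rw [ha, norm_div, Nat.factorial_succ, Nat.cast_mul, norm_mul, Complex.norm_natCast,
          Complex.norm_natCast]
        push_cast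
        field_simp
    _ ≤ _ := norm_iteratedDeriv_div_factorial_le hρ0 hf' k

theorem integral_norm_deriv_circleMap_le {f : ℂ → ℂ} {α C ρ : ℝ} (hα : 0 < α)
    (hf : DifferentiableOn ℂ f (ball 0 1))
    (hC : ∀ z ∈ ball (0 : ℂ) 1, ‖deriv f z‖ ≤ C * ‖1 - z‖ ^ (-(α + 1)))
    (hρ : 1 / 2 ≤ ρ) (hρ1 : ρ < 1) :
    ∫ t in 0..2 * π, ‖deriv f (circleMap 0 ρ t)‖ ≤
      C * (2 ^ (α + 2) * π / α * (1 - ρ) ^ (-α)) := by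
  have hC0 : 0 ≤ C := by simpa using (norm_nonneg _).trans (hC 0 (mem_ball_self one_pos))
  have hmem : ∀ t, circleMap 0 ρ t ∈ ball (0 : ℂ) 1 := fun t ↦ by
    simpa [norm_circleMap_zero, abs_of_pos (by linarith : 0 < ρ)] using hρ1
  have hcont : Continuous fun t ↦ ‖deriv f (circleMap 0 ρ t)‖ :=
    ((hf.analyticOnNhd isOpen_ball).deriv.continuousOn.comp_continuous
      (continuous_circleMap 0 ρ) hmem).norm
  have hbound : Continuous fun t ↦ C * ‖1 - circleMap 0 ρ t‖ ^ (-(α + 1)) :=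
    (continuous_norm_one_sub_circleMap_rpow (by linarith) hρ1 _).const_mul C
  calc _ ≤ ∫ t in 0..2 * π, C * ‖1 - circleMap 0 ρ t‖ ^ (-(α + 1)) :=
        intervalIntegral.integral_mono_on (by positivity) (hcont.intervalIntegrable _ _)
          (hbound.intervalIntegrable _ _) fun t _ ↦ hC _ (hmem t)
    _ ≤ _ := by
        rw [intervalIntegral.integral_const_mul]
        exact mul_le_mul_of_nonneg_left (integral_norm_one_sub_circleMap_rpow_le hα hρ hρ1) hC0

theorem exists_norm_coeff_le_of_norm_deriv_le {f : ℂ → ℂ} {a : ℕ → ℂ} {α C : ℝ} (hα : 0 < α)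
    (hf : DifferentiableOn ℂ f (ball 0 1))
    (hcoeff : ∀ z ∈ ball (0 : ℂ) 1, HasSum (fun n ↦ a n * z ^ n) (f z))
    (hC : ∀ z ∈ ball (0 : ℂ) 1, ‖deriv f z‖ ≤ C * ‖1 - z‖ ^ (-(α + 1))) :
    ∃ K : ℝ, ∀ n : ℕ, 1 ≤ n → ‖a n‖ ≤ K * (n : ℝ) ^ (α - 1) := by
  refine ⟨3 * 2 ^ α * 2 ^ (α + 2) * C / (2 * α), fun n hn ↦ ?_⟩
  obtain ⟨k, rfl⟩ := Nat.exists_eq_add_of_le' hn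
  set m : ℝ := ((k + 1 : ℕ) : ℝ)
  have hm : 1 ≤ m := by simp [m]
  have hm0 : 0 < m := by linarith
  set ρ : ℝ := m / (m + 1) with hρ
  have hρ0 : 0 < ρ := by positivity
  have hρ1 : ρ < 1 := (div_lt_one (by positivity)).2 (by linarith)
  have hρ2 : 1 / 2 ≤ ρ := by rw [le_div_iff₀ (by positivity)]; linarith
  have hpow : ρ⁻¹ ^ k ≤ 3 := calc
    ρ⁻¹ ^ k ≤ (1 + m⁻¹) ^ (k + 1) := by
      rw [show ρ⁻¹ = 1 + m⁻¹ by rw [hρ]; field_simp]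
      exact pow_le_pow_right₀ (le_add_of_nonneg_right (inv_nonneg.2 hm0.le)) k.le_succ
    _ ≤ Real.exp 1 := Real.one_add_inv_pow_le_exp
    _ ≤ 3 := Real.exp_one_lt_d9.le.trans (by norm_num)
  have hδ : (1 - ρ) ^ (-α) ≤ 2 ^ α * m ^ α := calc
    (1 - ρ) ^ (-α) = (m + 1) ^ α := by
      rw [show 1 - ρ = (m + 1)⁻¹ by rw [hρ]; field_simp; ring, Real.inv_rpow (by positivity),
        Real.rpow_neg (by positivity), inv_inv]
    _ ≤ (2 * m) ^ α := by gcongr; linarith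
    _ = 2 ^ α * m ^ α := Real.mul_rpow zero_le_two (by positivity)
  have hmain : m * ‖a (k + 1)‖ ≤ 3 * 2 ^ α * 2 ^ (α + 2) * C / (2 * α) * m ^ α := calc
    m * ‖a (k + 1)‖ ≤
        (2 * π)⁻¹ * (∫ t in 0..2 * π, ‖deriv f (circleMap 0 ρ t)‖) * ρ⁻¹ ^ k := by
      simpa [m] using succ_mul_norm_coeff_succ_le hf hcoeff hρ0 hρ1 k
    _ ≤ (2 * π)⁻¹ * (C * (2 ^ (α + 2) * π / α * (2 ^ α * m ^ α))) * 3 := by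
      have hC0 : 0 ≤ C := by simpa using (norm_nonneg _).trans (hC 0 (mem_ball_self one_pos))
      gcongr
      exact (integral_norm_deriv_circleMap_le hα hf hC hρ2 hρ1).trans (by gcongr)
    _ = 3 * 2 ^ α * 2 ^ (α + 2) * C / (2 * α) * m ^ α := by
      field_simp
  rw [Real.rpow_sub_one hm0.ne', ← mul_div_assoc, le_div_iff₀ hm0]
  linarith

theorem singularity_analysis_O_transfer_general
    (f : ℂ → ℂ) (a : ℕ → ℂ) (r θ α : ℝ)
    (hr : 1 < r) (hθ0 : 0 < θ) (hθ : θ < Real.pi / 2) (hα : 0 < α)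
    (Δ : Set ℂ)
    (hΔ : Δ = {z : ℂ | ‖z‖ < r ∧ z ≠ 1 ∧ θ < |Complex.arg (z - 1)|})
    (hf_disc : DifferentiableOn ℂ f (ball 0 1))
    (hf_Δ : DifferentiableOn ℂ f Δ)
    (hcoeff : ∀ z ∈ ball (0 : ℂ) 1, HasSum (fun n : ℕ => a n * z ^ n) (f z))
    (hbigO : ∃ C : ℝ, ∀ z ∈ Δ, ‖f z‖ ≤ C * ‖(1 : ℂ) - z‖ ^ (-α)) :
    ∃ K : ℝ, ∀ n : ℕ, 1 ≤ n → ‖a n‖ ≤ K * (n : ℝ) ^ (α - 1) := by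
  obtain ⟨C, hC⟩ := hbigO
  change Δ = deltaDomain r θ at hΔ
  subst hΔ
  have hC' : ∀ z ∈ deltaDomain r θ, ‖f z‖ ≤ max C 0 * ‖1 - z‖ ^ (-α) := fun z hz ↦
    (hC z hz).trans (by gcongr; exact le_max_left C 0)
  obtain ⟨C', hderiv⟩ :=
    exists_norm_deriv_le_of_deltaDomain hr hθ0 hθ hα.le (le_max_right C 0) hf_Δ hC'
  exact exists_norm_coeff_le_of_norm_deriv_le hα hf_disc hcoeff fun z hz ↦ hderiv z
    ⟨ball_subset_closedBall hz, fun h ↦ by simp [mem_singleton_iff.1 h] at hz⟩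

/-- O-transfer theorem of singularity analysis: if `f` is analytic on the open
unit disc, continuous on the closed disc minus `{1}`, analytic on a Δ-domain
`Δ(θ, r) = {z : ‖z‖ < r, z ≠ 1, θ < |Arg(z-1)|}` with `r > 1`, `0 < θ < π/2`,
and `f(z) = O((1-z)^(-α))` as `z → 1` in `Δ` for some `α > 0`, then the Taylor
coefficients `a n` of `f` satisfy `‖a n‖ ≤ K·n^(α-1)` for all `n ≥ 1`. -/
theorem singularity_analysis_O_transfer
    (f : ℂ → ℂ) (a : ℕ → ℂ) (r θ α : ℝ)
    (hr : 1 < r) (hθ0 : 0 < θ) (hθ : θ < Real.pi / 2) (hα : 0 < α)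
    (Δ : Set ℂ)
    (hΔ : Δ = {z : ℂ | ‖z‖ < r ∧ z ≠ 1 ∧ θ < |Complex.arg (z - 1)|})
    (hf_disc : DifferentiableOn ℂ f (ball 0 1))
    (hf_cont : ContinuousOn f (closedBall 0 1 \ {1}))
    (hf_Δ : DifferentiableOn ℂ f Δ)
    (hcoeff : ∀ z ∈ ball (0 : ℂ) 1, HasSum (fun n : ℕ => a n * z ^ n) (f z))
    (hbigO : ∃ C : ℝ, ∀ z ∈ Δ, ‖f z‖ ≤ C * ‖(1 : ℂ) - z‖ ^ (-α)) :
    ∃ K : ℝ, ∀ n : ℕ, 1 ≤ n → ‖a n‖ ≤ K * (n : ℝ) ^ (α - 1) :=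
  singularity_analysis_O_transfer_general f a r θ α hr hθ0 hθ hα Δ hΔ hf_disc hf_Δ hcoeff hbigO
end
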